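/- Generalized substitution theorem (Theorem 3): Let A and B be formulas, let S_A be an R-expression containing a designated occurrence of the formula A, and let S_B be the result of replacing that occurrence of A in S_A by B. Then from the four R-expressions constituting A ⇔ˢ B taken as premises, each of the four R-expressions constituting S_A ⇔ˢ S_B is derivable in SC∞; i.e., A ⇔ˢ B ⊢ S_A ⇔ˢ S_B. -/

import Mathlib

/-- Formulas of the connexive logic C: propositional variables, strong
negation `∼`, conjunction, disjunction and implication. -/
inductive Formula : Type
  | var : Nat → Formula
  | snot : Formula → Formula
  | and : Formula → Formula → Formula
  | or : Formula → Formula → Formula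
  | imp : Formula → Formula → Formula
deriving DecidableEq

/-- R-expressions over the language of C.  `fm A` is the formula `A`,
`negFm A` is `−A`, `seq Δ S` is `(Δ ⇒ S)` and `negSeq Δ S` is `−(Δ ⇒ S)`.
The convention `−−S = S` is implemented by the involution `rneg`. -/
inductive RExpr : Type
  | fm : Formula → RExpr
  | negFm : Formula → RExpr
  | seq : List RExpr → RExpr → RExpr
  | negSeq : List RExpr → RExpr → RExpr

/-- The refutation `−S` of an R-expression, with `−−S = S`. -/
def rneg : RExpr → RExpr
  | .fm A => .negFm A
  | .negFm A => .fm A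
  | .seq Δ S => .negSeq Δ S
  | .negSeq Δ S => .seq Δ S

/-- Derivability in the higher-order sequent calculus `SC∞` from a set `P`
of R-expressions taken as additional premises. -/
inductive SC (P : Set RExpr) : RExpr → Prop
  | prem {S} : S ∈ P → SC P S
  | rf (S) : SC P (.seq [S] S)
  | wl {Δ S} (T) : SC P (.seq Δ S) → SC P (.seq (Δ ++ [T]) S)
  | pl {U} (Δ S T Γ) : SC P (.seq (Δ ++ S :: T :: Γ) U) → SC P (.seq (Δ ++ T :: S :: Γ) U)
  | cl {Δ S T} : SC P (.seq (Δ ++ [S, S]) T) → SC P (.seq (Δ ++ [S]) T)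
  | cut {Δ S T} : SC P (.seq Δ S) → SC P (.seq (Δ ++ [S]) T) → SC P (.seq Δ T)
  | riP {Γ Δ S} : SC P (.seq (Γ ++ Δ) S) → SC P (.seq Γ (.seq Δ S))
  | liP {Γ Δ S T} : (∀ U ∈ Δ, SC P (.seq Γ U)) → SC P (.seq (Γ ++ [S]) T) →
      SC P (.seq (Γ ++ [.seq Δ S]) T)
  | riN {Δ Γ S} : SC P (.seq (Δ ++ Γ) (rneg S)) → SC P (.seq Δ (rneg (.seq Γ S)))
  | riN' {Δ Γ S} : SC P (.seq Δ (rneg (.seq Γ S))) → SC P (.seq (Δ ++ Γ) (rneg S))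
  | liN {Δ Γ S T} : (∀ U ∈ Γ, SC P (.seq Δ U)) → SC P (.seq (Δ ++ [rneg S]) T) →
      SC P (.seq (Δ ++ [rneg (.seq Γ S)]) T)
  | snotL {Δ A S} : SC P (.seq (Δ ++ [.negFm A]) S) → SC P (.seq (Δ ++ [.fm (.snot A)]) S)
  | snotR {Δ A} : SC P (.seq Δ (.negFm A)) → SC P (.seq Δ (.fm (.snot A)))
  | snotLm {Δ A S} : SC P (.seq (Δ ++ [.fm A]) S) → SC P (.seq (Δ ++ [.negFm (.snot A)]) S)
  | snotRm {Δ A} : SC P (.seq Δ (.fm A)) → SC P (.seq Δ (.negFm (.snot A)))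
  | andL {Δ A B S} : SC P (.seq (Δ ++ [.fm A, .fm B]) S) → SC P (.seq (Δ ++ [.fm (.and A B)]) S)
  | andR {Δ A B} : SC P (.seq Δ (.fm A)) → SC P (.seq Δ (.fm B)) → SC P (.seq Δ (.fm (.and A B)))
  | andLm {Δ A B S} : SC P (.seq (Δ ++ [.negFm A]) S) → SC P (.seq (Δ ++ [.negFm B]) S) →
      SC P (.seq (Δ ++ [.negFm (.and A B)]) S)
  | andRm₁ {Δ A B} : SC P (.seq Δ (.negFm A)) → SC P (.seq Δ (.negFm (.and A B)))
  | andRm₂ {Δ A B} : SC P (.seq Δ (.negFm B)) → SC P (.seq Δ (.negFm (.and A B)))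
  | orL {Δ A B S} : SC P (.seq (Δ ++ [.fm A]) S) → SC P (.seq (Δ ++ [.fm B]) S) →
      SC P (.seq (Δ ++ [.fm (.or A B)]) S)
  | orR₁ {Δ A B} : SC P (.seq Δ (.fm A)) → SC P (.seq Δ (.fm (.or A B)))
  | orR₂ {Δ A B} : SC P (.seq Δ (.fm B)) → SC P (.seq Δ (.fm (.or A B)))
  | orLm {Δ A B S} : SC P (.seq (Δ ++ [.negFm A, .negFm B]) S) →
      SC P (.seq (Δ ++ [.negFm (.or A B)]) S)
  | orRm {Δ A B} : SC P (.seq Δ (.negFm A)) → SC P (.seq Δ (.negFm B)) →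
      SC P (.seq Δ (.negFm (.or A B)))
  | impL {Δ A B S} : SC P (.seq (Δ ++ [.seq [.fm A] (.fm B)]) S) →
      SC P (.seq (Δ ++ [.fm (.imp A B)]) S)
  | impR {Δ A B} : SC P (.seq Δ (.seq [.fm A] (.fm B))) → SC P (.seq Δ (.fm (.imp A B)))
  | impLm {Δ A B S} : SC P (.seq (Δ ++ [.negSeq [.fm A] (.fm B)]) S) →
      SC P (.seq (Δ ++ [.negFm (.imp A B)]) S)
  | impRm {Δ A B} : SC P (.seq Δ (.negSeq [.fm A] (.fm B))) → SC P (.seq Δ (.negFm (.imp A B)))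

/-- `S ⇔ˢ T` relative to the premise set `P`: the four R-expressions
`S ⇒ T`, `T ⇒ S`, `−S ⇒ −T`, `−T ⇒ −S` are each derivable from `P`. -/
def StrictEquiv (P : Set RExpr) (S T : RExpr) : Prop :=
  SC P (.seq [S] T) ∧ SC P (.seq [T] S) ∧
  SC P (.seq [rneg S] (rneg T)) ∧ SC P (.seq [rneg T] (rneg S))

/-- The four R-expressions constituting `S ⇔ˢ T`, taken as premises. -/
def equivPrems (S T : RExpr) : Set RExpr :=
  {RExpr.seq [S] T, RExpr.seq [T] S, RExpr.seq [rneg S] (rneg T), RExpr.seq [rneg T] (rneg S)}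
/-- `ReplF A B C D`: the formula `C` contains a designated occurrence of the
formula `A`, and `D` is the result of replacing that occurrence by `B`. -/
inductive ReplF (A B : Formula) : Formula → Formula → Prop
  | here : ReplF A B A B
  | snot {C D} : ReplF A B C D → ReplF A B (.snot C) (.snot D)
  | andLeft {C D} (E) : ReplF A B C D → ReplF A B (.and C E) (.and D E)
  | andRight {C D} (E) : ReplF A B C D → ReplF A B (.and E C) (.and E D)
  | orLeft {C D} (E) : ReplF A B C D → ReplF A B (.or C E) (.or D E)
  | orRight {C D} (E) : ReplF A B C D → ReplF A B (.or E C) (.or E D)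
  | impLeft {C D} (E) : ReplF A B C D → ReplF A B (.imp C E) (.imp D E)
  | impRight {C D} (E) : ReplF A B C D → ReplF A B (.imp E C) (.imp E D)

/-- `ReplFR A B U V`: the R-expression `U` contains a designated occurrence of
the formula `A` (inside one of its formula components), and `V` is the result
of replacing that occurrence by `B`. -/
inductive ReplFR (A B : Formula) : RExpr → RExpr → Prop
  | fm {C D} : ReplF A B C D → ReplFR A B (.fm C) (.fm D)
  | neg {U V} : ReplFR A B U V → ReplFR A B (rneg U) (rneg V)
  | seqSucc {Δ U V} : ReplFR A B U V → ReplFR A B (.seq Δ U) (.seq Δ V)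
  | seqMem {U V W} (Δ Γ) : ReplFR A B U V →
      ReplFR A B (.seq (Δ ++ U :: Γ) W) (.seq (Δ ++ V :: Γ) W)

/-! The proof is by induction on the position of the replaced occurrence. Strict equivalence
of formulas is a congruence for every connective, and strict equivalence of R-expressions is a
congruence for sequent formation `Δ ⇒ S`; in the antecedent only the positive halves `U ⇒ V`,
`V ⇒ U` are needed, since LI⁺ and LI⁻ use the members of `Δ` positively even in `−(Δ ⇒ S)`.
The structural rules make derivability of `Δ ⇒ S` depend only on the set of members of `Δ`. -/

theorem rneg_rneg (S : RExpr) : rneg (rneg S) = S := by cases S <;> rfl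

@[simp]
theorem rneg_fm (A : Formula) : rneg (.fm A) = .negFm A := rfl

namespace SC

variable {P : Set RExpr}

theorem perm_append_left {l l' : List RExpr} (p : l.Perm l') (Γ : List RExpr) {S : RExpr}
    (h : SC P (.seq (Γ ++ l) S)) : SC P (.seq (Γ ++ l') S) := by
  induction p generalizing Γ with
  | nil => exact h
  | cons x _ ih => simpa using ih (Γ ++ [x]) (by simpa using h)
  | swap x y l => exact SC.pl Γ y x l h
  | trans _ _ ih₁ ih₂ => exact ih₂ Γ (ih₁ Γ h)

theorem perm {Δ Δ' : List RExpr} {S : RExpr} (h : SC P (.seq Δ S)) (p : Δ.Perm Δ') :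
    SC P (.seq Δ' S) :=
  perm_append_left p [] h

theorem weaken_append {Δ : List RExpr} {S : RExpr} (h : SC P (.seq Δ S)) (Γ : List RExpr) :
    SC P (.seq (Δ ++ Γ) S) := by
  induction Γ generalizing Δ with
  | nil => simpa using h
  | cons T Γ ih => simpa using ih (SC.wl T h)

theorem of_mem {Δ : List RExpr} {S : RExpr} (h : S ∈ Δ) : SC P (.seq Δ S) := by
  obtain ⟨s, t, rfl⟩ := List.append_of_mem h
  have h₀ : SC P (.seq (S :: (s ++ t)) S) := (SC.rf S).weaken_append (s ++ t)
  exact h₀.perm List.perm_middle.symm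

theorem cut_of_forall_mem {Δ Γ : List RExpr} {S : RExpr} (hΓ : ∀ U ∈ Γ, SC P (.seq Δ U))
    (h : SC P (.seq (Δ ++ Γ) S)) : SC P (.seq Δ S) := by
  induction Γ with
  | nil => simpa using h
  | cons U Γ ih =>
    have hU : SC P (.seq (Δ ++ Γ) U) := (hΓ U (by simp)).weaken_append Γ
    have hS : SC P (.seq ((Δ ++ Γ) ++ [U]) S) :=
      h.perm (List.perm_middle.trans (List.perm_append_singleton _ _).symm)
    exact ih (fun V hV => hΓ V (by simp [hV])) (SC.cut hU hS)

theorem of_subset {Δ Δ' : List RExpr} {S : RExpr} (h : SC P (.seq Δ S)) (hs : Δ ⊆ Δ') :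
    SC P (.seq Δ' S) :=
  cut_of_forall_mem (fun _ hU => of_mem (hs hU)) ((h.weaken_append Δ').perm List.perm_append_comm)

theorem seq_seq {Δ Δ' : List RExpr} {S T : RExpr} (hΔ : ∀ U ∈ Δ, SC P (.seq Δ' U))
    (hST : SC P (.seq [S] T)) : SC P (.seq [.seq Δ S] (.seq Δ' T)) := by
  have h : SC P (.seq (Δ' ++ [.seq Δ S]) T) := SC.liP hΔ (hST.of_subset (by simp))
  exact SC.riP (h.perm List.perm_append_comm)

theorem rneg_seq_rneg_seq {Δ Δ' : List RExpr} {S T : RExpr} (hΔ : ∀ U ∈ Δ, SC P (.seq Δ' U))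
    (hST : SC P (.seq [rneg S] (rneg T))) :
    SC P (.seq [rneg (.seq Δ S)] (rneg (.seq Δ' T))) := by
  have h : SC P (.seq (Δ' ++ [rneg (.seq Δ S)]) (rneg T)) := SC.liN hΔ (hST.of_subset (by simp))
  exact SC.riN (h.perm List.perm_append_comm)

theorem forall_mem_replace {Δ Γ : List RExpr} {U V : RExpr} (hVU : SC P (.seq [V] U)) :
    ∀ X ∈ Δ ++ U :: Γ, SC P (.seq (Δ ++ V :: Γ) X) := by
  intro X hX
  rcases List.mem_append.1 hX with hΔ | hUΓ
  · exact of_mem (by simp [hΔ])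
  rcases List.mem_cons.1 hUΓ with rfl | hΓ
  · exact hVU.of_subset (by simp)
  · exact of_mem (by simp [hΓ])

end SC

namespace StrictEquiv

variable {P : Set RExpr}

theorem refl (S : RExpr) : StrictEquiv P S S :=
  ⟨SC.rf S, SC.rf S, SC.rf _, SC.rf _⟩

theorem rneg {S T : RExpr} (h : StrictEquiv P S T) : StrictEquiv P (rneg S) (rneg T) := by
  obtain ⟨h₁, h₂, h₃, h₄⟩ := h
  exact ⟨h₃, h₄, by simpa only [rneg_rneg] using h₁, by simpa only [rneg_rneg] using h₂⟩

theorem seq {Δ Δ' : List RExpr} {S T : RExpr} (hΔ : ∀ U ∈ Δ, SC P (.seq Δ' U))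
    (hΔ' : ∀ U ∈ Δ', SC P (.seq Δ U)) (h : StrictEquiv P S T) :
    StrictEquiv P (.seq Δ S) (.seq Δ' T) :=
  ⟨SC.seq_seq hΔ h.1, SC.seq_seq hΔ' h.2.1,
    SC.rneg_seq_rneg_seq hΔ h.2.2.1, SC.rneg_seq_rneg_seq hΔ' h.2.2.2⟩

variable {C D E F : Formula}

theorem snot (h : StrictEquiv P (.fm C) (.fm D)) :
    StrictEquiv P (.fm (.snot C)) (.fm (.snot D)) :=
  ⟨SC.snotR (SC.snotL (Δ := []) h.2.2.1), SC.snotR (SC.snotL (Δ := []) h.2.2.2),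
    SC.snotRm (SC.snotLm (Δ := []) h.1), SC.snotRm (SC.snotLm (Δ := []) h.2.1)⟩

theorem and (hCD : StrictEquiv P (.fm C) (.fm D)) (hEF : StrictEquiv P (.fm E) (.fm F)) :
    StrictEquiv P (.fm (.and C E)) (.fm (.and D F)) :=
  ⟨SC.andR (SC.andL (Δ := []) (hCD.1.of_subset (by simp)))
      (SC.andL (Δ := []) (hEF.1.of_subset (by simp))),
    SC.andR (SC.andL (Δ := []) (hCD.2.1.of_subset (by simp)))
      (SC.andL (Δ := []) (hEF.2.1.of_subset (by simp))),
    SC.andLm (Δ := []) (SC.andRm₁ hCD.2.2.1) (SC.andRm₂ hEF.2.2.1),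
    SC.andLm (Δ := []) (SC.andRm₁ hCD.2.2.2) (SC.andRm₂ hEF.2.2.2)⟩

theorem or (hCD : StrictEquiv P (.fm C) (.fm D)) (hEF : StrictEquiv P (.fm E) (.fm F)) :
    StrictEquiv P (.fm (.or C E)) (.fm (.or D F)) :=
  ⟨SC.orL (Δ := []) (SC.orR₁ hCD.1) (SC.orR₂ hEF.1),
    SC.orL (Δ := []) (SC.orR₁ hCD.2.1) (SC.orR₂ hEF.2.1),
    SC.orLm (Δ := []) (SC.orRm (hCD.2.2.1.of_subset (by simp)) (hEF.2.2.1.of_subset (by simp))),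
    SC.orLm (Δ := []) (SC.orRm (hCD.2.2.2.of_subset (by simp)) (hEF.2.2.2.of_subset (by simp)))⟩

theorem imp (hCD : StrictEquiv P (.fm C) (.fm D)) (hEF : StrictEquiv P (.fm E) (.fm F)) :
    StrictEquiv P (.fm (.imp C E)) (.fm (.imp D F)) := by
  obtain ⟨h₁, h₂, h₃, h₄⟩ :=
    StrictEquiv.seq (List.forall_mem_singleton.2 hCD.2.1) (List.forall_mem_singleton.2 hCD.1) hEF
  exact ⟨SC.impR (SC.impL (Δ := []) h₁), SC.impR (SC.impL (Δ := []) h₂),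
    SC.impRm (SC.impLm (Δ := []) h₃), SC.impRm (SC.impLm (Δ := []) h₄)⟩

end StrictEquiv

theorem ReplF.strictEquiv {P : Set RExpr} {A B C D : Formula} (h : ReplF A B C D)
    (hAB : StrictEquiv P (.fm A) (.fm B)) : StrictEquiv P (.fm C) (.fm D) := by
  induction h with
  | here => exact hAB
  | snot _ ih => exact ih.snot
  | andLeft _ _ ih => exact ih.and (.refl _)
  | andRight _ _ ih => exact (StrictEquiv.refl _).and ih
  | orLeft _ _ ih => exact ih.or (.refl _)
  | orRight _ _ ih => exact (StrictEquiv.refl _).or ih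
  | impLeft _ _ ih => exact ih.imp (.refl _)
  | impRight _ _ ih => exact (StrictEquiv.refl _).imp ih

theorem strictEquiv_equivPrems (S T : RExpr) : StrictEquiv (equivPrems S T) S T :=
  ⟨SC.prem (by simp [equivPrems]), SC.prem (by simp [equivPrems]),
    SC.prem (by simp [equivPrems]), SC.prem (by simp [equivPrems])⟩

/-- Theorem 3 (generalized substitution theorem):
`A ⇔ˢ B ⊢ S_A ⇔ˢ S_B`. -/
theorem substitution_generalized (A B : Formula) (SA SB : RExpr) (h : ReplFR A B SA SB) :
    StrictEquiv (equivPrems (.fm A) (.fm B)) SA SB := by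
  have hAB := strictEquiv_equivPrems (.fm A) (.fm B)
  induction h with
  | fm hCD => exact hCD.strictEquiv hAB
  | neg _ ih => exact ih.rneg
  | seqSucc _ ih => exact .seq (fun _ => SC.of_mem) (fun _ => SC.of_mem) ih
  | seqMem Δ Γ _ ih =>
    exact .seq (SC.forall_mem_replace ih.2.1) (SC.forall_mem_replace ih.1) (.refl _)
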